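/- Let n ∈ ℕ and r ∈ ℕ₀ with P_r ≤ n < P_{r+1} (so the leading digit n_r > 0), and set n' = n − n_r P_r. Then: (1) if n_r < s_r/2 then n < ⊖n; (2) if n_r > s_r/2 then n > ⊖n; (3) if n_r = s_r/2 (so s_r is even) then n < ⊖n ⟺ n' < ⊖n', n > ⊖n ⟺ n' > ⊖n', and n = ⊖n ⟺ n' = ⊖n'. -/

import Mathlib

open MeasureTheory

noncomputable section

/-- `Pprod s k = s 0 * s 1 * ⋯ * s (k-1)`. -/
def Pprod (s : ℕ → ℕ) : ℕ → ℕ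
  | 0 => 1
  | k + 1 => Pprod s k * s k

/-- The `k`-th digit of `n` in the mixed-radix expansion determined by `s`. -/
def digit (s : ℕ → ℕ) (n k : ℕ) : ℕ := (n / Pprod s k) % s k

/-- Digitwise negation `⊖ n`. -/
def oneg (s : ℕ → ℕ) (n : ℕ) : ℕ :=
  ∑ k ∈ Finset.range (n + 1), ((s k - digit s n k) % s k) * Pprod s k

/-- Digitwise addition `n ⊕ m`. -/
def oplus (s : ℕ → ℕ) (n m : ℕ) : ℕ :=
  ∑ k ∈ Finset.range (n + m + 1), ((digit s n k + digit s m k) % s k) * Pprod s k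

/-- The complex Vilenkin function `ψ n` on `G = ∏ k, ℤ/(s k)ℤ`. -/
def vil (s : ℕ → ℕ) (n : ℕ) (x : ∀ k, ZMod (s k)) : ℂ :=
  ∏ k ∈ Finset.range (n + 1),
    Complex.exp (2 * (Real.pi : ℂ) * Complex.I * (digit s n k : ℂ) * ((x k).val : ℂ) / (s k : ℂ))

/-! Split off the leading digit: `n = n' + d P_r` and `⊖n = ⊖n' + (s_r - d) P_r` with `n', ⊖n' < P_r`.
Since the lower parts are smaller than `P_r`, the comparison of `n` with `⊖n` is decided by comparing
`d` with `s_r - d`, and only when these agree (`d = s_r / 2`) is it passed on to `n'` and `⊖n'`. -/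

section Vilenkin

variable {s : ℕ → ℕ}

lemma Pprod_pos (hs : ∀ k, 0 < s k) (k : ℕ) : 0 < Pprod s k := by
  induction k with
  | zero => exact Nat.one_pos
  | succ k ih => exact Nat.mul_pos ih (hs k)

variable (s) in
lemma Pprod_dvd_Pprod {k m : ℕ} (h : k ≤ m) : Pprod s k ∣ Pprod s m := by
  induction m, h using Nat.le_induction with
  | base => rfl
  | succ m _ ih => exact ih.mul_right _

lemma Pprod_monotone (hs : ∀ k, 0 < s k) : Monotone (Pprod s) :=
  fun _ m h => Nat.le_of_dvd (Pprod_pos hs m) (Pprod_dvd_Pprod s h)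

lemma lt_Pprod (hs : ∀ k, 2 ≤ s k) (k : ℕ) : k < Pprod s k := by
  induction k with
  | zero => exact Nat.one_pos
  | succ k ih =>
    calc k + 1 < 2 * Pprod s k := by omega
      _ ≤ Pprod s k * s k := by rw [mul_comm]; exact Nat.mul_le_mul_left _ (hs k)

lemma digit_eq_zero_of_lt {n k : ℕ} (h : n < Pprod s k) : digit s n k = 0 := by
  simp [digit, Nat.div_eq_of_lt h]

lemma digit_mod_Pprod (n : ℕ) {k r : ℕ} (h : k < r) :
    digit s (n % Pprod s r) k = digit s n k := by
  obtain ⟨c, hc⟩ := Pprod_dvd_Pprod s (Nat.succ_le_of_lt h)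
  have hc' : Pprod s r = Pprod s k * (s k * c) := by rw [hc, ← mul_assoc]; rfl
  rw [digit, digit, hc', Nat.mod_mul_right_div_self, Nat.mod_mul_right_mod]

lemma mod_Pprod_succ (n r : ℕ) :
    n % Pprod s (r + 1) = n % Pprod s r + digit s n r * Pprod s r := by
  rw [digit, mul_comm _ (Pprod s r)]
  exact Nat.mod_mul

lemma sum_mul_Pprod_lt (a : ℕ → ℕ) {r : ℕ} (ha : ∀ k < r, a k < s k) :
    ∑ k ∈ Finset.range r, a k * Pprod s k < Pprod s r := by
  induction r with
  | zero => exact Nat.one_pos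
  | succ r ih =>
    rw [Finset.sum_range_succ]
    calc ∑ k ∈ Finset.range r, a k * Pprod s k + a r * Pprod s r
        < Pprod s r + a r * Pprod s r := by
          have := ih fun k hk => ha k (Nat.lt_succ_of_lt hk)
          omega
      _ = (a r + 1) * Pprod s r := by ring
      _ ≤ s r * Pprod s r := Nat.mul_le_mul_right _ (ha r (Nat.lt_succ_self r))
      _ = Pprod s (r + 1) := mul_comm _ _

lemma oneg_eq_sum_range (hs : ∀ k, 2 ≤ s k) {n m : ℕ} (h : n < Pprod s m) :
    oneg s n = ∑ k ∈ Finset.range m, ((s k - digit s n k) % s k) * Pprod s k := by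
  have hvanish : ∀ k ≥ min m (n + 1), ((s k - digit s n k) % s k) * Pprod s k = 0 := by
    intro k hk
    have hnk : n < Pprod s k := by
      rcases min_le_iff.mp hk with hmk | hnk
      · exact h.trans_le (Pprod_monotone (fun k => two_pos.trans_le (hs k)) hmk)
      · exact (Nat.lt_of_succ_le hnk).trans (lt_Pprod hs k)
    simp [digit_eq_zero_of_lt hnk]
  rw [oneg, Finset.eventually_constant_sum hvanish (min_le_right _ _),
    Finset.eventually_constant_sum hvanish (min_le_left _ _)]

lemma oneg_lt_Pprod (hs : ∀ k, 2 ≤ s k) {n m : ℕ} (h : n < Pprod s m) :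
    oneg s n < Pprod s m := by
  rw [oneg_eq_sum_range hs h]
  exact sum_mul_Pprod_lt _ fun k _ => Nat.mod_lt _ (two_pos.trans_le (hs k))

lemma oneg_eq_oneg_mod_add (hs : ∀ k, 2 ≤ s k) {n r : ℕ} (h : n < Pprod s (r + 1)) :
    oneg s n = oneg s (n % Pprod s r) + ((s r - digit s n r) % s r) * Pprod s r := by
  have hmod : n % Pprod s r < Pprod s r :=
    Nat.mod_lt _ (Pprod_pos (fun k => two_pos.trans_le (hs k)) r)
  rw [oneg_eq_sum_range hs h, Finset.sum_range_succ, oneg_eq_sum_range hs hmod]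
  congr 1
  exact Finset.sum_congr rfl fun k hk => by rw [digit_mod_Pprod n (Finset.mem_range.mp hk)]

end Vilenkin

lemma add_mul_lt_add_mul {a b c d P : ℕ} (ha : a < P) (hcd : c < d) : a + c * P < b + d * P :=
  calc a + c * P < (c + 1) * P := by rw [add_mul, one_mul]; omega
    _ ≤ d * P := Nat.mul_le_mul_right _ hcd
    _ ≤ b + d * P := Nat.le_add_left _ _

theorem oneg_compare_leading_digit (s : ℕ → ℕ) (hs : ∀ k, 2 ≤ s k) (n r : ℕ)
    (h1 : Pprod s r ≤ n) (h2 : n < Pprod s (r + 1)) :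
    (2 * digit s n r < s r → n < oneg s n) ∧
    (s r < 2 * digit s n r → oneg s n < n) ∧
    (2 * digit s n r = s r →
      ((n < oneg s n ↔ n - digit s n r * Pprod s r < oneg s (n - digit s n r * Pprod s r)) ∧
       (oneg s n < n ↔ oneg s (n - digit s n r * Pprod s r) < n - digit s n r * Pprod s r) ∧
       (n = oneg s n ↔ n - digit s n r * Pprod s r = oneg s (n - digit s n r * Pprod s r)))) := by
  set P := Pprod s r
  set d := digit s n r
  set m := n % P
  have hm : m < P := Nat.mod_lt _ (Pprod_pos (fun k => two_pos.trans_le (hs k)) r)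
  have hn : m + d * P = n := by rw [← mod_Pprod_succ, Nat.mod_eq_of_lt h2]
  have hd : 0 < d := Nat.pos_of_ne_zero fun h0 => by simp only [h0, zero_mul] at hn; omega
  have hds : d < s r := Nat.mod_lt _ (two_pos.trans_le (hs r))
  have hneg : oneg s n = oneg s m + (s r - d) * P := by
    rw [oneg_eq_oneg_mod_add hs h2, Nat.mod_eq_of_lt (by omega : s r - d < s r)]
  have hm' : oneg s m < P := oneg_lt_Pprod hs hm
  rw [show n - d * P = m by omega, hneg]
  refine ⟨fun _ => ?_, fun _ => ?_, fun _ => ?_⟩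
  · rw [← hn]; exact add_mul_lt_add_mul hm (by omega)
  · rw [← hn]; exact add_mul_lt_add_mul hm' (by omega)
  · rw [show s r - d = d by omega, ← hn]; omega
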